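/- (L¹ uncertainty, finite measure, mean zero.) Let (Ω,d,μ) be a metric measure space with μ(Ω) < ∞ whose isoperimetric profile I is concave, continuous, I(0) = 0, strictly positive on (0, μ(Ω)), symmetric about μ(Ω)/2, and increasing on (0, μ(Ω)/2]. Set Φ(t) = min{t, μ(Ω)/2}/I(min{t, μ(Ω)/2}), and let w : Ω → (0,∞) be an isoperimetric weight with constant C(w) = sup_{r>0} (1/r)·Φ(μ{w ≤ r}) < ∞. Let α > 0 and let f : Ω → ℝ be Lipschitz and integrable with |∇f| and w^α f integrable, such that ∫_Ω f dμ = 0, and assume the co-area inequality for f: ∫_{−∞}^{∞} I(μ{f > s}) ds ≤ ∫_Ω |∇f| dμ. Then for every r > 0, ∫_Ω |f| dμ ≤ 2 C(w) r ∫_Ω |∇f| dμ + 2 r^{−α} ∫_Ω w^α |f| dμ. -/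

import Mathlib

open MeasureTheory Filter Set Topology
open scoped ENNReal NNReal

/-- The modulus of the gradient of `f` at `x`:
`|∇f|(x) = limsup_{y→x} |f(x) - f(y)| / d(x,y)`. -/
noncomputable def gradMod {Ω : Type*} [MetricSpace Ω] (f : Ω → ℝ) (x : Ω) : ℝ :=
  Filter.limsup (fun y => |f x - f y| / dist x y) (𝓝[≠] x)

/-- The Minkowski content (perimeter) of a set `A`:
`μ⁺(A) = liminf_{h→0⁺} (μ(A_h) - μ(A))/h`, where `A_h` is the open `h`-thickening of `A`. -/
noncomputable def minkContent {Ω : Type*} [MetricSpace Ω] [MeasurableSpace Ω]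
    (μ : Measure Ω) (A : Set Ω) : ℝ≥0∞ :=
  Filter.liminf (fun h : ℝ => (μ (Metric.thickening h A) - μ A) / ENNReal.ofReal h)
    (𝓝[>] (0 : ℝ))

/-- The isoperimetric profile of `(Ω,d,μ)`:
`I(t) = inf {μ⁺(A) : A Borel, μ(A) = t}`. -/
noncomputable def isoProfile {Ω : Type*} [MetricSpace Ω] [MeasurableSpace Ω]
    (μ : Measure Ω) (t : ℝ≥0∞) : ℝ≥0∞ :=
  ⨅ (A : Set Ω) (_ : MeasurableSet A) (_ : μ A = t), minkContent μ A

/-- `m` is a median of `f` with respect to `μ`. -/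
def IsMedian {Ω : Type*} [MeasurableSpace Ω] (μ : Measure Ω) (f : Ω → ℝ) (m : ℝ) : Prop :=
  μ Set.univ / 2 ≤ μ {x | m ≤ f x} ∧ μ Set.univ / 2 ≤ μ {x | f x ≤ m}

/-- `Φ(t) = min{t, V/2} / I(min{t, V/2})` where `V = μ(Ω)`. -/
noncomputable def PhiIso (V : ℝ) (I : ℝ → ℝ) (t : ℝ) : ℝ :=
  min t (V / 2) / I (min t (V / 2))

/-!
Let `m` be a median of `f` and `A = {w ≤ r}`. By the layer-cake formula, `∫_A |f - m|` is the
integral over `t > 0` of `μ (A ∩ {f - m > t}) + μ (A ∩ {m - f > t})`. Each of these level sets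
has measure at most `μ(Ω)/2`, and for such a set `B` concavity and monotonicity of `I` give
`μ (A ∩ B) ≤ min (μ B) (μ A) ≤ Φ(μ A) I(μ B)`. Reassembling the two halves with the symmetry of
`I` yields `∫_A |f - m| ≤ Φ(μ A) ∫ I(μ{f > s}) ds ≤ C r ∫ |∇f|` by the co-area inequality.
Off `A` one has `1 ≤ (w / r)^α`, so `∫_{Aᶜ} |f| ≤ r^{-α} ∫ w^α |f|`. Finally `∫ f = 0` gives
`m μ(A) = ∫_A (m - f) - ∫_{Aᶜ} f`, which bounds the remaining term `|m| μ(A)` by the same two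
quantities.
-/

lemma gradMod_nonneg {Ω : Type*} [MetricSpace Ω] (f : Ω → ℝ) (x : Ω) : 0 ≤ gradMod f x := by
  rcases (𝓝[≠] x).eq_or_neBot with hbot | hne
  · simp [gradMod, hbot, Filter.limsup, Filter.limsSup]
  · refine Real.sInf_nonneg fun a (ha : ∀ᶠ y in 𝓝[≠] x, |f x - f y| / dist x y ≤ a) => ?_
    obtain ⟨y, hy⟩ := ha.exists
    exact (div_nonneg (abs_nonneg _) dist_nonneg).trans hy

theorem ENNReal.ofReal_abs_eq_ofReal_add_ofReal_neg (a : ℝ) :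
    ENNReal.ofReal |a| = ENNReal.ofReal a + ENNReal.ofReal (-a) := by
  rcases le_total 0 a with h | h
  · simp [abs_of_nonneg h, ENNReal.ofReal_of_nonpos (neg_nonpos.2 h)]
  · simp [abs_of_nonpos h, ENNReal.ofReal_of_nonpos h]

theorem lintegral_Ioi_comp_add_add_lintegral_Ioi_comp_sub_le (F : ℝ → ℝ≥0∞) (m : ℝ) :
    (∫⁻ t in Ioi 0, F (m + t)) + ∫⁻ t in Ioi 0, F (m - t) ≤ ∫⁻ t, F t := by
  have hadd : ∫⁻ t in Ioi 0, F (m + t) = ∫⁻ t in Ioi m, F t := by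
    simpa [image_const_add_Ioi] using (measurePreserving_add_left volume m).setLIntegral_comp_emb
      (MeasurableEquiv.addLeft m).measurableEmbedding F (Ioi 0)
  have hsub : ∫⁻ t in Ioi 0, F (m - t) = ∫⁻ t in Iio m, F t := by
    simpa [image_const_sub_Ioi] using
      (Measure.measurePreserving_sub_left volume m).setLIntegral_comp_emb
        (MeasurableEquiv.subLeft m).measurableEmbedding F (Ioi 0)
  rw [hadd, hsub, ← lintegral_union measurableSet_Iio (Ioi_disjoint_Iio_same (a := m))]
  exact setLIntegral_le_lintegral _ _

section Profile

variable {V : ℝ} {I : ℝ → ℝ}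

theorem ConcaveOn.div_apply_le_div_apply (hIconc : ConcaveOn ℝ (Icc 0 V) I) (hI0 : I 0 = 0)
    {s t : ℝ} (hs : 0 < s) (hst : s ≤ t) (htV : t ≤ V) (hIt : 0 < I t) :
    s / I s ≤ t / I t := by
  have ht : 0 < t := hs.trans_le hst
  have hslope : I t / t ≤ I s / s := by
    simpa [hI0, neg_div] using hIconc.neg.secant_mono (a := 0) ⟨le_rfl, ht.le.trans htV⟩
      ⟨hs.le, hst.trans htV⟩ ⟨ht.le, htV⟩ hs.ne' ht.ne' hst
  rw [← inv_div, ← inv_div (I t)]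
  exact inv_anti₀ (div_pos hIt ht) hslope

theorem min_le_div_apply_mul_apply (hIconc : ConcaveOn ℝ (Icc 0 V) I) (hI0 : I 0 = 0)
    (hIpos : ∀ t, 0 < t → t < V → 0 < I t) (hImono : MonotoneOn I (Ioc 0 (V / 2)))
    {a b : ℝ} (ha : 0 ≤ a) (haV : a ≤ V / 2) (hb : 0 ≤ b) (hbV : b ≤ V / 2) :
    min a b ≤ b / I b * I a := by
  rcases le_total a b with hab | hba
  · rw [min_eq_left hab]
    rcases ha.eq_or_lt with rfl | ha
    · simp [hI0]
    have hIa : 0 < I a := hIpos a ha (by linarith)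
    calc a = a / I a * I a := (div_mul_cancel₀ a hIa.ne').symm
      _ ≤ b / I b * I a := mul_le_mul_of_nonneg_right (hIconc.div_apply_le_div_apply hI0 ha hab
          (by linarith) (hIpos b (by linarith) (by linarith))) hIa.le
  · rw [min_eq_right hba]
    rcases hb.eq_or_lt with rfl | hb
    · simp
    have hIb : 0 < I b := hIpos b hb (by linarith)
    calc b = b / I b * I b := (div_mul_cancel₀ b hIb.ne').symm
      _ ≤ b / I b * I a := mul_le_mul_of_nonneg_left (hImono ⟨hb, hbV⟩ ⟨hb.trans_le hba, haV⟩ hba)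
          (div_nonneg hb.le hIb.le)

theorem min_le_phiIso_mul (hIconc : ConcaveOn ℝ (Icc 0 V) I) (hI0 : I 0 = 0)
    (hIpos : ∀ t, 0 < t → t < V → 0 < I t) (hImono : MonotoneOn I (Ioc 0 (V / 2)))
    {a b : ℝ} (ha : 0 ≤ a) (haV : a ≤ V / 2) (hb : 0 ≤ b) :
    min a b ≤ PhiIso V I b * I a := by
  have hmin : min a b = min a (min b (V / 2)) := by
    rw [← min_assoc, min_right_comm, min_eq_left haV]
  rw [hmin]
  exact min_le_div_apply_mul_apply hIconc hI0 hIpos hImono ha haV (le_min hb (ha.trans haV))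
    (min_le_right _ _)

theorem phiIso_nonneg (hV : 0 ≤ V) (hI0 : I 0 = 0) (hIpos : ∀ t, 0 < t → t < V → 0 < I t)
    {b : ℝ} (hb : 0 ≤ b) : 0 ≤ PhiIso V I b := by
  have hb' : 0 ≤ min b (V / 2) := le_min hb (by linarith)
  refine div_nonneg hb' ?_
  rcases hb'.eq_or_lt with h | h
  · rw [← h, hI0]
  · have : min b (V / 2) ≤ V / 2 := min_le_right _ _
    exact (hIpos _ h (by linarith)).le

end Profile

section Median

variable {Ω : Type*} [MeasurableSpace Ω] {μ : Measure Ω} [IsFiniteMeasure μ] {f : Ω → ℝ}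

theorem measure_compl_le_half_iff {S : Set Ω} (hS : MeasurableSet S) :
    μ Sᶜ ≤ μ univ / 2 ↔ μ univ / 2 ≤ μ S := by
  rw [measure_compl hS (measure_ne_top μ S), tsub_le_iff_right]
  nth_rewrite 1 [← ENNReal.add_halves (μ univ)]
  exact ENNReal.add_le_add_iff_left (ENNReal.div_ne_top (measure_ne_top μ _) two_ne_zero)

theorem IsMedian.measure_gt_le_half {m : ℝ} (hm : IsMedian μ f m) (hf : Measurable f) :
    μ {x | m < f x} ≤ μ univ / 2 := by
  simpa only [compl_ofPred, not_le] using
    (measure_compl_le_half_iff (measurableSet_le hf measurable_const)).2 hm.2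

theorem IsMedian.measure_lt_le_half {m : ℝ} (hm : IsMedian μ f m) (hf : Measurable f) :
    μ {x | f x < m} ≤ μ univ / 2 := by
  simpa only [compl_ofPred, not_le] using
    (measure_compl_le_half_iff (measurableSet_le measurable_const hf)).2 hm.1

theorem le_measure_le_of_forall_gt (hf : Measurable f) {a : ℝ} {c : ℝ≥0∞}
    (h : ∀ r > a, c ≤ μ {x | f x ≤ r}) : c ≤ μ {x | f x ≤ a} := by
  have hlim := tendsto_measure_biInter_gt (μ := μ) (s := fun r => {x | f x ≤ r}) (a := a)
    (fun r _ => (hf measurableSet_Iic).nullMeasurableSet) (fun _ _ _ hij _ hx => hx.trans hij)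
    ⟨a + 1, by linarith, measure_ne_top μ _⟩
  have hInter : ⋂ r > a, {x | f x ≤ r} = {x | f x ≤ a} := by
    ext x
    simpa using forall_gt_imp_ge_iff_le_of_dense
  rw [hInter] at hlim
  exact ge_of_tendsto hlim (eventually_nhdsWithin_of_forall h)

theorem exists_half_lt_measure_le (hμ : μ univ ≠ 0) :
    ∃ s, μ univ / 2 < μ {x | f x ≤ s} := by
  have hlim := tendsto_measure_iUnion_atTop (μ := μ) (s := fun s : ℝ => {x | f x ≤ s})
    fun _ _ hst _ hx => hx.trans hst
  have hunion : ⋃ s : ℝ, {x | f x ≤ s} = univ :=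
    iUnion_eq_univ_iff.2 fun x => ⟨f x, mem_ofPred.2 le_rfl⟩
  rw [hunion] at hlim
  exact (hlim.eventually (lt_mem_nhds (ENNReal.half_lt_self hμ (measure_ne_top μ _)))).exists

theorem exists_isMedian (hf : Measurable f) : ∃ m, IsMedian μ f m := by
  rcases eq_or_ne (μ univ) 0 with hμ | hμ
  · exact ⟨0, by simp [IsMedian, hμ]⟩
  set T := {s : ℝ | μ univ / 2 ≤ μ {x | f x ≤ s}}
  obtain ⟨s, hs⟩ := exists_half_lt_measure_le hμ
  obtain ⟨b, hb⟩ := exists_half_lt_measure_le (f := -f) hμ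
  have hbdd : BddBelow T := by
    refine ⟨-b, fun t ht => le_of_not_gt fun htb => hb.not_ge ?_⟩
    have hsub : {x | f x ≤ t} ⊆ {x | f x < -b} := fun x hx => lt_of_le_of_lt hx htb
    simpa [compl_ofPred, neg_le] using
      (measure_compl_le_half_iff (measurableSet_lt hf measurable_const)).2
        (ht.trans (measure_mono hsub))
  have hbelow : ∀ r < sInf T, μ univ / 2 ≤ μ {x | r < f x} := by
    intro r hr
    have hr' : r ∉ T := notMem_of_lt_csInf hr hbdd
    have hS : MeasurableSet {x | f x ≤ r} := measurableSet_le hf measurable_const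
    simpa only [compl_ofPred, not_le] using (not_le.1 (mt (measure_compl_le_half_iff hS).1 hr')).le
  refine ⟨sInf T, ?_, ?_⟩
  · simpa using le_measure_le_of_forall_gt hf.neg (a := -sInf T) fun r hr =>
      (hbelow (-r) (by linarith)).trans (measure_mono fun x (hx : -r < f x) => by
        simp only [mem_ofPred_eq, Pi.neg_apply]; linarith)
  · refine le_measure_le_of_forall_gt hf fun r hr => ?_
    obtain ⟨t, htT, htr⟩ := exists_lt_of_csInf_lt ⟨s, hs.le⟩ hr
    exact htT.trans (measure_mono fun x hx => le_trans hx htr.le)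

end Median

section Layercake

variable {Ω : Type*} [MeasurableSpace Ω] {μ : Measure Ω} [IsFiniteMeasure μ] {I : ℝ → ℝ}

theorem measure_inter_le_ofReal_phiIso_mul
    (hIconc : ConcaveOn ℝ (Icc 0 (μ univ).toReal) I) (hI0 : I 0 = 0)
    (hIpos : ∀ t, 0 < t → t < (μ univ).toReal → 0 < I t)
    (hImono : MonotoneOn I (Ioc 0 ((μ univ).toReal / 2))) (A : Set Ω) {B : Set Ω}
    (hB : μ B ≤ μ univ / 2) :
    μ (A ∩ B) ≤ ENNReal.ofReal (PhiIso (μ univ).toReal I (μ A).toReal * I (μ B).toReal) := by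
  have hBV : (μ B).toReal ≤ (μ univ).toReal / 2 := by
    simpa using ENNReal.toReal_mono (ENNReal.div_ne_top (measure_ne_top μ _) two_ne_zero) hB
  have hmin : (μ (A ∩ B)).toReal ≤ min (μ B).toReal (μ A).toReal :=
    le_min (measureReal_mono inter_subset_right) (measureReal_mono inter_subset_left)
  rw [← ENNReal.ofReal_toReal (measure_ne_top μ (A ∩ B))]
  exact ENNReal.ofReal_le_ofReal (hmin.trans (min_le_phiIso_mul hIconc hI0 hIpos hImono
    ENNReal.toReal_nonneg hBV ENNReal.toReal_nonneg))

theorem setLIntegral_ofReal_le_phiIso_mul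
    (hIconc : ConcaveOn ℝ (Icc 0 (μ univ).toReal) I) (hI0 : I 0 = 0)
    (hIpos : ∀ t, 0 < t → t < (μ univ).toReal → 0 < I t)
    (hImono : MonotoneOn I (Ioc 0 ((μ univ).toReal / 2))) {h : Ω → ℝ} (hh : Measurable h)
    (B : ℝ → Set Ω) (hB : ∀ t > 0, {x | t < h x} ⊆ B t)
    (hBhalf : ∀ t > 0, μ (B t) ≤ μ univ / 2) (A : Set Ω) :
    ∫⁻ x in A, ENNReal.ofReal (h x) ∂μ ≤ ENNReal.ofReal (PhiIso (μ univ).toReal I (μ A).toReal) *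
      ∫⁻ t in Ioi 0, ENNReal.ofReal (I (μ (B t)).toReal) := by
  have hΦ := phiIso_nonneg ENNReal.toReal_nonneg hI0 hIpos (b := (μ A).toReal)
    ENNReal.toReal_nonneg
  rw [← lintegral_const_mul' _ _ ENNReal.ofReal_ne_top]
  calc ∫⁻ x in A, ENNReal.ofReal (h x) ∂μ = ∫⁻ x in A, ENNReal.ofReal (max (h x) 0) ∂μ := by
        simp
    _ = ∫⁻ t in Ioi 0, μ.restrict A {x | t < max (h x) 0} :=
        lintegral_eq_lintegral_meas_lt _ (ae_of_all _ fun x => le_max_right _ _)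
          (hh.max measurable_const).aemeasurable
    _ ≤ _ := by
      refine lintegral_mono_ae <|
        ae_restrict_of_forall_mem measurableSet_Ioi fun t (ht : 0 < t) => ?_
      have hsub : {x | t < max (h x) 0} ⊆ B t := fun x hx =>
        hB t ht ((lt_max_iff.1 hx).resolve_right ht.not_gt)
      rw [← ENNReal.ofReal_mul hΦ,
        Measure.restrict_apply (measurableSet_lt measurable_const (hh.max measurable_const))]
      exact (measure_mono fun x (hx : x ∈ _ ∩ A) => (⟨hx.2, hsub hx.1⟩ : x ∈ A ∩ B t)).trans
        (measure_inter_le_ofReal_phiIso_mul hIconc hI0 hIpos hImono A (hBhalf t ht))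

theorem apply_measure_compl_toReal_eq
    (hIsym : ∀ t ∈ Icc 0 (μ univ).toReal, I ((μ univ).toReal - t) = I t) {S : Set Ω}
    (hS : MeasurableSet S) : I (μ Sᶜ).toReal = I (μ S).toReal := by
  rw [← measureReal_def, measureReal_compl hS]
  exact hIsym _ ⟨measureReal_nonneg, measureReal_mono (subset_univ S)⟩

theorem setLIntegral_ofReal_abs_sub_median_le
    (hIconc : ConcaveOn ℝ (Icc 0 (μ univ).toReal) I) (hI0 : I 0 = 0)
    (hIpos : ∀ t, 0 < t → t < (μ univ).toReal → 0 < I t)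
    (hIsym : ∀ t ∈ Icc 0 (μ univ).toReal, I ((μ univ).toReal - t) = I t)
    (hImono : MonotoneOn I (Ioc 0 ((μ univ).toReal / 2))) {f : Ω → ℝ} (hf : Measurable f)
    {m : ℝ} (hm : IsMedian μ f m) (A : Set Ω) :
    ∫⁻ x in A, ENNReal.ofReal |f x - m| ∂μ ≤
      ENNReal.ofReal (PhiIso (μ univ).toReal I (μ A).toReal) *
        ∫⁻ s, ENNReal.ofReal (I (μ {x | s < f x}).toReal) := by
  set Φ := ENNReal.ofReal (PhiIso (μ univ).toReal I (μ A).toReal)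
  set F : ℝ → ℝ≥0∞ := fun s => ENNReal.ofReal (I (μ {x | s < f x}).toReal)
  have hsplit : ∫⁻ x in A, ENNReal.ofReal |f x - m| ∂μ =
      ∫⁻ x in A, ENNReal.ofReal (f x - m) ∂μ + ∫⁻ x in A, ENNReal.ofReal (m - f x) ∂μ := by
    simp_rw [ENNReal.ofReal_abs_eq_ofReal_add_ofReal_neg, neg_sub]
    exact lintegral_add_left (hf.sub measurable_const).ennreal_ofReal _
  have hupper : ∫⁻ x in A, ENNReal.ofReal (f x - m) ∂μ ≤ Φ * ∫⁻ t in Ioi 0, F (m + t) :=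
    setLIntegral_ofReal_le_phiIso_mul hIconc hI0 hIpos hImono (hf.sub measurable_const)
      (fun t => {x | m + t < f x})
      (fun t _ x (hx : t < f x - m) => by simp only [mem_ofPred_eq]; linarith)
      (fun t ht => (measure_mono fun x (hx : m + t < f x) => (by linarith : m < f x)).trans
        (hm.measure_gt_le_half hf)) A
  -- `{f ≤ m - t}` rather than `{f < m - t}`: as a complement of `{m - t < f}`, the symmetry of
  -- `I` then matches it with `F (m - t)` exactly, atoms of `f` included.
  have hlower : ∫⁻ x in A, ENNReal.ofReal (m - f x) ∂μ ≤ Φ * ∫⁻ t in Ioi 0, F (m - t) := by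
    refine (setLIntegral_ofReal_le_phiIso_mul hIconc hI0 hIpos hImono (measurable_const.sub hf)
      (fun t => {x | f x ≤ m - t})
      (fun t _ x (hx : t < m - f x) => by simp only [mem_ofPred_eq]; linarith)
      (fun t ht => (measure_mono fun x (hx : f x ≤ m - t) => (by linarith : f x < m)).trans
        (hm.measure_lt_le_half hf)) A).trans_eq ?_
    congr 1
    refine lintegral_congr fun t => ?_
    have hS : MeasurableSet {x | m - t < f x} := measurableSet_lt measurable_const hf
    simp only [F, ← apply_measure_compl_toReal_eq hIsym hS, compl_ofPred, not_lt]
  calc ∫⁻ x in A, ENNReal.ofReal |f x - m| ∂μ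
      ≤ Φ * (∫⁻ t in Ioi 0, F (m + t)) + Φ * ∫⁻ t in Ioi 0, F (m - t) :=
        hsplit.trans_le (add_le_add hupper hlower)
    _ ≤ Φ * ∫⁻ s, F s := by
        rw [← mul_add]
        exact mul_le_mul_right (lintegral_Ioi_comp_add_add_lintegral_Ioi_comp_sub_le F m) Φ

end Layercake

section Integrals

variable {Ω : Type*} [MeasurableSpace Ω] {μ : Measure Ω} {f : Ω → ℝ}

theorem setIntegral_abs_sub_median_le [IsFiniteMeasure μ] {I : ℝ → ℝ}
    (hIconc : ConcaveOn ℝ (Icc 0 (μ univ).toReal) I) (hI0 : I 0 = 0)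
    (hIpos : ∀ t, 0 < t → t < (μ univ).toReal → 0 < I t)
    (hIsym : ∀ t ∈ Icc 0 (μ univ).toReal, I ((μ univ).toReal - t) = I t)
    (hImono : MonotoneOn I (Ioc 0 ((μ univ).toReal / 2))) (hf : Measurable f)
    {m : ℝ} (hm : IsMedian μ f m) (A : Set Ω) {G : ℝ} (hG : 0 ≤ G)
    (hcoarea : ∫⁻ s, ENNReal.ofReal (I (μ {x | s < f x}).toReal) ≤ ENNReal.ofReal G) :
    ∫ x in A, |f x - m| ∂μ ≤ PhiIso (μ univ).toReal I (μ A).toReal * G := by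
  have hΦ := phiIso_nonneg ENNReal.toReal_nonneg hI0 hIpos (b := (μ A).toReal)
    ENNReal.toReal_nonneg
  rw [integral_eq_lintegral_of_nonneg_ae (ae_of_all _ fun x => abs_nonneg _)
    (by fun_prop : Measurable fun x => |f x - m|).aestronglyMeasurable]
  refine ENNReal.toReal_le_of_le_ofReal (mul_nonneg hΦ hG) ?_
  rw [ENNReal.ofReal_mul hΦ]
  exact (setLIntegral_ofReal_abs_sub_median_le hIconc hI0 hIpos hIsym hImono hf hm A).trans
    (mul_le_mul_right hcoarea _)

theorem integral_abs_le_of_integral_eq_zero [IsFiniteMeasure μ] (hf : Integrable f μ)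
    (hmean : ∫ x, f x ∂μ = 0) {A : Set Ω} (hA : MeasurableSet A) (m : ℝ) :
    ∫ x, |f x| ∂μ ≤ 2 * ∫ x in A, |f x - m| ∂μ + 2 * ∫ x in Aᶜ, |f x| ∂μ := by
  have hfm : Integrable (fun x => f x - m) μ := hf.sub (integrable_const m)
  have hmA : |m| * μ.real A ≤ ∫ x in A, |f x - m| ∂μ + ∫ x in Aᶜ, |f x| ∂μ := by
    have hid : m * μ.real A = -(∫ x in A, (f x - m) ∂μ) - ∫ x in Aᶜ, f x ∂μ := by
      have hsum := (integral_add_compl hA hf).trans hmean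
      rw [integral_sub hf.integrableOn (integrableOn_const (measure_ne_top μ A)),
        setIntegral_const, smul_eq_mul]
      linarith
    calc |m| * μ.real A = |m * μ.real A| := by rw [abs_mul, abs_of_nonneg measureReal_nonneg]
      _ ≤ |∫ x in A, (f x - m) ∂μ| + |∫ x in Aᶜ, f x ∂μ| := by
        rw [hid, ← abs_neg (∫ x in A, (f x - m) ∂μ)]
        exact abs_sub _ _
      _ ≤ _ := add_le_add (abs_integral_le_integral_abs) (abs_integral_le_integral_abs)
  have hA_le : ∫ x in A, |f x| ∂μ ≤ ∫ x in A, |f x - m| ∂μ + |m| * μ.real A := by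
    calc ∫ x in A, |f x| ∂μ ≤ ∫ x in A, (|f x - m| + |m|) ∂μ :=
          setIntegral_mono hf.abs.integrableOn
            (hfm.abs.integrableOn.add (integrableOn_const (measure_ne_top μ A)))
            fun x => by linarith [abs_sub_abs_le_abs_sub (f x) m]
      _ = _ := by
        rw [integral_add hfm.abs.integrableOn (integrableOn_const (measure_ne_top μ A)),
          setIntegral_const, smul_eq_mul, mul_comm]
  linarith [integral_add_compl hA hf.abs]

theorem setIntegral_abs_le_rpow_neg_mul {w : Ω → ℝ} (hw : Measurable w) (hw0 : ∀ x, 0 ≤ w x)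
    {α r : ℝ} (hα : 0 ≤ α) (hr : 0 < r) (hwf : Integrable (fun x => w x ^ α * f x) μ) :
    ∫ x in {x | r < w x}, |f x| ∂μ ≤ r ^ (-α) * ∫ x, w x ^ α * |f x| ∂μ := by
  have hwf' : Integrable (fun x => w x ^ α * |f x|) μ := by
    simpa [abs_mul, abs_of_nonneg (Real.rpow_nonneg (hw0 _) α)] using hwf.abs
  have hpoint : ∀ x ∈ {x | r < w x}, |f x| ≤ r ^ (-α) * (w x ^ α * |f x|) := fun x hx => by
    have hone : 1 ≤ r ^ (-α) * w x ^ α := by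
      rw [Real.rpow_neg hr.le, inv_mul_eq_div, one_le_div (Real.rpow_pos_of_pos hr α)]
      exact Real.rpow_le_rpow hr.le (le_of_lt hx) hα
    rw [← mul_assoc]
    exact le_mul_of_one_le_left (abs_nonneg _) hone
  calc ∫ x in {x | r < w x}, |f x| ∂μ ≤ ∫ x in {x | r < w x}, r ^ (-α) * (w x ^ α * |f x|) ∂μ :=
        integral_mono_of_nonneg (ae_of_all _ fun x => abs_nonneg _) (hwf'.const_mul _).integrableOn
          (ae_restrict_of_forall_mem (measurableSet_lt measurable_const hw) hpoint)
    _ = r ^ (-α) * ∫ x in {x | r < w x}, w x ^ α * |f x| ∂μ := integral_const_mul _ _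
    _ ≤ r ^ (-α) * ∫ x, w x ^ α * |f x| ∂μ :=
        mul_le_mul_of_nonneg_left (setIntegral_le_integral hwf' (ae_of_all _ fun x =>
          mul_nonneg (Real.rpow_nonneg (hw0 x) α) (abs_nonneg _))) (Real.rpow_pos_of_pos hr _).le

end Integrals

theorem l1_uncertainty_mean_zero_general {Ω : Type*} [MetricSpace Ω] [MeasurableSpace Ω]
    [BorelSpace Ω] (μ : Measure Ω) [IsFiniteMeasure μ]
    (I : ℝ → ℝ)
    (hIconc : ConcaveOn ℝ (Set.Icc 0 (μ Set.univ).toReal) I)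
    (hI0 : I 0 = 0)
    (hIpos : ∀ t : ℝ, 0 < t → t < (μ Set.univ).toReal → 0 < I t)
    (hIsym : ∀ t ∈ Set.Icc 0 (μ Set.univ).toReal, I ((μ Set.univ).toReal - t) = I t)
    (hImono : MonotoneOn I (Set.Ioc 0 ((μ Set.univ).toReal / 2)))
    (w : Ω → ℝ) (hw_meas : Measurable w) (hw_pos : ∀ x, 0 < w x)
    (C : ℝ)
    (hC : ∀ r : ℝ, 0 < r →
      PhiIso (μ Set.univ).toReal I ((μ {x | w x ≤ r}).toReal) ≤ C * r)
    (α : ℝ) (hα : 0 < α)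
    (K : ℝ≥0) (f : Ω → ℝ) (hlip : LipschitzWith K f)
    (hfint : Integrable f μ)
    (hwfint : Integrable (fun x => w x ^ α * f x) μ)
    (hmean : ∫ x, f x ∂μ = 0)
    (hcoarea : ∫⁻ s : ℝ, ENNReal.ofReal (I ((μ {x | s < f x}).toReal)) ≤
      ENNReal.ofReal (∫ x, gradMod f x ∂μ)) :
    ∀ r : ℝ, 0 < r →
      ∫ x, |f x| ∂μ ≤
        2 * C * r * ∫ x, gradMod f x ∂μ + 2 * r ^ (-α) * ∫ x, w x ^ α * |f x| ∂μ := by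
  intro r hr
  have hf : Measurable f := hlip.continuous.measurable
  obtain ⟨m, hm⟩ := exists_isMedian (μ := μ) hf
  have hG : 0 ≤ ∫ x, gradMod f x ∂μ := integral_nonneg (gradMod_nonneg f)
  have hnear : ∫ x in {x | w x ≤ r}, |f x - m| ∂μ ≤ C * r * ∫ x, gradMod f x ∂μ :=
    (setIntegral_abs_sub_median_le hIconc hI0 hIpos hIsym hImono hf hm _ hG hcoarea).trans
      (mul_le_mul_of_nonneg_right (hC r hr) hG)
  have hfar : ∫ x in {x | w x ≤ r}ᶜ, |f x| ∂μ ≤ r ^ (-α) * ∫ x, w x ^ α * |f x| ∂μ := by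
    simpa only [compl_ofPred, not_le] using
      setIntegral_abs_le_rpow_neg_mul hw_meas (fun x => (hw_pos x).le) hα.le hr hwfint
  have hsplit := integral_abs_le_of_integral_eq_zero hfint hmean
    (measurableSet_le hw_meas (measurable_const (a := r))) m
  linarith

/-- **L¹ uncertainty, finite measure, mean zero.**
If `w` is an isoperimetric weight with constant `C`, `α > 0` and `f` is Lipschitz,
integrable, with `|∇f|` and `w^α f` integrable, `∫ f dμ = 0`, and `f` satisfies
the co-area inequality, then for every `r > 0`,
`∫|f| dμ ≤ 2 C r ∫|∇f| dμ + 2 r^{-α} ∫ w^α |f| dμ`. -/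
theorem l1_uncertainty_mean_zero {Ω : Type*} [MetricSpace Ω] [MeasurableSpace Ω]
    [BorelSpace Ω] (μ : Measure Ω) [IsFiniteMeasure μ] [IsFiniteMeasureOnCompacts μ]
    (I : ℝ → ℝ)
    (hIprof : ∀ t : ℝ, 0 ≤ t → ENNReal.ofReal t < μ Set.univ →
      ENNReal.ofReal (I t) = isoProfile μ (ENNReal.ofReal t))
    (hIconc : ConcaveOn ℝ (Set.Icc 0 (μ Set.univ).toReal) I)
    (hIcont : ContinuousOn I (Set.Icc 0 (μ Set.univ).toReal))
    (hI0 : I 0 = 0)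
    (hIpos : ∀ t : ℝ, 0 < t → t < (μ Set.univ).toReal → 0 < I t)
    (hIsym : ∀ t ∈ Set.Icc 0 (μ Set.univ).toReal, I ((μ Set.univ).toReal - t) = I t)
    (hImono : MonotoneOn I (Set.Ioc 0 ((μ Set.univ).toReal / 2)))
    (w : Ω → ℝ) (hw_meas : Measurable w) (hw_pos : ∀ x, 0 < w x)
    (C : ℝ)
    (hC : ∀ r : ℝ, 0 < r →
      PhiIso (μ Set.univ).toReal I ((μ {x | w x ≤ r}).toReal) ≤ C * r)
    (α : ℝ) (hα : 0 < α)
    (K : ℝ≥0) (f : Ω → ℝ) (hlip : LipschitzWith K f)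
    (hfint : Integrable f μ) (hgint : Integrable (gradMod f) μ)
    (hwfint : Integrable (fun x => w x ^ α * f x) μ)
    (hmean : ∫ x, f x ∂μ = 0)
    (hcoarea : ∫⁻ s : ℝ, ENNReal.ofReal (I ((μ {x | s < f x}).toReal)) ≤
      ENNReal.ofReal (∫ x, gradMod f x ∂μ)) :
    ∀ r : ℝ, 0 < r →
      ∫ x, |f x| ∂μ ≤
        2 * C * r * ∫ x, gradMod f x ∂μ + 2 * r ^ (-α) * ∫ x, w x ^ α * |f x| ∂μ :=
  l1_uncertainty_mean_zero_general μ I hIconc hI0 hIpos hIsym hImono w hw_meas hw_pos C hC α hα K f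
    hlip hfint hwfint hmean hcoarea
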